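/- A weak higher dimensional transition system X = (S, μ : L → Σ, T) satisfies CSA1 if and only if X is orthogonal to the canonical morphism D[a] → C_1[a] for every a ∈ Σ, i.e. every morphism D[a] → X factors uniquely through D[a] → C_1[a]. -/

import Mathlib

variable {S L Λ : Type*}

/-- The Multiset axiom: the set of transitions is closed under permutations of
the list of actions. -/
def MultisetAxiom (T : S → List L → S → Prop) : Prop :=
  ∀ (α β : S) (l l' : List L), l.Perm l' → T α l β → T α l' β

/-- The Coherence axiom. -/
def CoherenceAxiom (T : S → List L → S → Prop) : Prop :=
  ∀ (α β ν₁ ν₂ : S) (l₁ l₂ l₃ : List L), l₁ ≠ [] → l₂ ≠ [] → l₃ ≠ [] →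
    T α (l₁ ++ l₂ ++ l₃) β → T α l₁ ν₁ → T ν₁ (l₂ ++ l₃) β →
    T α (l₁ ++ l₂) ν₂ → T ν₂ l₃ β → T ν₁ l₂ ν₂

/-- The first Cattani-Sassone axiom. -/
def CSA1 (μ : L → Λ) (T : S → List L → S → Prop) : Prop :=
  ∀ (α β : S) (u u' : L), T α [u] β → T α [u'] β → μ u = μ u' → u = u'

/-- The Unique intermediate state axiom. -/
def UniqueIntermediate (T : S → List L → S → Prop) : Prop :=
  ∀ (α β : S) (l₁ l₂ : List L), l₁ ≠ [] → l₂ ≠ [] → T α (l₁ ++ l₂) β →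
    ∃! ν, T α l₁ ν ∧ T ν l₂ β
universe u u1 u2 u3 u4 u5 u6

/-- A transition structure over the set of labels `Λ`: a set of states `S`, a
set of actions `L`, a labelling map `μ : L → Λ`, and a set of transitions
`(α, u_1, …, u_n, β)` encoded as `T α [u_1, …, u_n] β`. Weak higher dimensional
transition systems are the transition structures whose transitions have
nonempty lists of actions and satisfying the Multiset and Coherence axioms. -/
structure TransSys (Λ : Type u) where
  /-- the states -/
  S : Type u1
  /-- the actions -/
  L : Type u2
  /-- the labelling map -/
  μ : L → Λ
  /-- the transitions -/
  T : S → List L → S → Prop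

/-- A morphism of (weak higher dimensional) transition systems: a pair of set
maps on states and actions commuting with the labelling maps and taking
transitions to transitions. -/
structure TransSys.Hom {Λ : Type u} (X : TransSys.{u, u1, u2} Λ)
    (Y : TransSys.{u, u3, u4} Λ) where
  /-- the map on states -/
  f0 : X.S → Y.S
  /-- the map on actions -/
  fa : X.L → Y.L
  label : ∀ x, Y.μ (fa x) = X.μ x
  map : ∀ (α : X.S) (l : List X.L) (β : X.S), X.T α l β → Y.T (f0 α) (l.map fa) (f0 β)

/-- Composition of morphisms of transition systems. -/
def TransSys.Hom.comp {Λ : Type u} {X : TransSys.{u, u1, u2} Λ}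
    {Y : TransSys.{u, u3, u4} Λ} {Z : TransSys.{u, u5, u6} Λ}
    (g : Y.Hom Z) (f : X.Hom Y) : X.Hom Z where
  f0 := fun x => g.f0 (f.f0 x)
  fa := fun x => g.fa (f.fa x)
  label := fun x => (g.label (f.fa x)).trans (f.label x)
  map := fun α l β h => by
    have h2 := g.map _ _ _ (f.map α l β h)
    simpa [List.map_map, Function.comp_def] using h2

/-- The set of transitions of the cube `C_n[a_1,…,a_n]`: the states are the
elements of `{0,1}^n`, the actions are the indices `i ∈ {1,…,n}` (the action
`i` standing for the pair `(a_i, i)`, labelled by `a_i`). -/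
@[reducible] def CubeT (n : ℕ) (ε : Fin n → Bool) (l : List (Fin n)) (ε' : Fin n → Bool) :
    Prop :=
  l ≠ [] ∧ l.Nodup ∧ (∀ i, ε i ≤ ε' i) ∧ ∀ i : Fin n, ε i ≠ ε' i ↔ i ∈ l

/-- The cube `C_n[a_1,…,a_n]` as a (weak higher dimensional) transition
system. -/
@[reducible] def cube {Λ : Type u} (n : ℕ) (a : Fin n → Λ) : TransSys.{u, 0, 0} Λ where
  S := Fin n → Bool
  L := Fin n
  μ := a
  T := CubeT n
/-- The weak higher dimensional transition system `D[a]`: two states `0` and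
`1` (encoded by `false` and `true`), two actions `(a,1)` and `(a,2)` (encoded
by `false` and `true`) both labelled by `a`, and the two transitions
`(0,(a,1),1)` and `(0,(a,2),1)`. -/
@[reducible] def dSys {Λ : Type u} (a : Λ) : TransSys.{u, 0, 0} Λ where
  S := Bool
  L := Bool
  μ := fun _ => a
  T := fun α l β => α = false ∧ β = true ∧ (l = [false] ∨ l = [true])

/-- The canonical morphism `D[a] → C_1[a]`: the identity on states, sending
both actions to the unique action `(a,1)` of `C_1[a]`. -/
def dToC {Λ : Type u} (a : Λ) : (dSys a).Hom (cube 1 (fun _ => a)) where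
  f0 := fun b _ => b
  fa := fun _ => 0
  label := fun _ => rfl
  map := fun α l β h => by
    obtain ⟨hα, hβ, hl⟩ := h
    subst hα; subst hβ
    have hmap : l.map (fun _ : Bool => (0 : Fin 1)) = [0] := by
      rcases hl with h | h <;> subst h <;> rfl
    rw [hmap]
    exact ⟨by simp, by simp, fun i => by simp, fun i => by simp [Fin.eq_zero i]⟩

/-!
Both actions of `D[a]` have the same source, target and label, so CSA1 says exactly that every
morphism `D[a] → X` identifies them, i.e. factors through `D[a] → C_1[a]`, which collapses the
two actions. The factorisation is unique because `D[a] → C_1[a]` is surjective on states and on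
actions.
-/

@[ext]
theorem TransSys.Hom.ext {Λ : Type u} {X : TransSys.{u, u1, u2} Λ}
    {Y : TransSys.{u, u3, u4} Λ} {f g : X.Hom Y} (h0 : f.f0 = g.f0) (ha : f.fa = g.fa) : f = g := by
  cases f; cases g
  cases h0; cases ha
  rfl

theorem cubeT_one_iff {ε ε' : Fin 1 → Bool} {l : List (Fin 1)} :
    CubeT 1 ε l ε' ↔ ε 0 = false ∧ ε' 0 = true ∧ l = [0] := by
  constructor
  · rintro ⟨hl, hnd, hle, hiff⟩
    have hl0 : l = [0] := by
      have hlen : l.length ≤ 1 := by simpa using hnd.length_le_card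
      match l, hl, hlen with
      | [x], _, _ => rw [Fin.eq_zero x]
    have hne : ε 0 ≠ ε' 0 := (hiff 0).mpr (by simp [hl0])
    have hle0 := hle 0
    refine ⟨?_, ?_, hl0⟩ <;> revert hne hle0 <;> cases ε 0 <;> cases ε' 0 <;> decide
  · rintro ⟨h, h', rfl⟩
    refine ⟨by simp, by simp, fun i => ?_, fun i => ?_⟩ <;> rw [Fin.eq_zero i] <;> simp [h, h']

section

variable {Λ : Type u} {X : TransSys.{u, u1, u2} Λ}

def cubeOneHom {a : Λ} {α β : X.S} {u : X.L} (h : X.T α [u] β) (hu : X.μ u = a) :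
    (cube 1 (fun _ => a)).Hom X where
  f0 ε := bif ε 0 then β else α
  fa _ := u
  label _ := hu
  map ε l ε' hT := by
    obtain ⟨hε, hε', rfl⟩ := cubeT_one_iff.mp hT
    simpa [hε, hε'] using h

def dSysHom {α β : X.S} {u u' : X.L} (h : X.T α [u] β) (h' : X.T α [u'] β)
    (hμ : X.μ u = X.μ u') : (dSys (X.μ u)).Hom X where
  f0 b := bif b then β else α
  fa b := bif b then u' else u
  label b := by cases b <;> simp [hμ]
  map s l t := by
    rintro ⟨rfl, rfl, rfl | rfl⟩
    · simpa using h
    · simpa using h'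

theorem TransSys.Hom.dSys_transition {a : Λ} (f : (dSys a).Hom X) (b : Bool) :
    X.T (f.f0 false) [f.fa b] (f.f0 true) := by
  simpa using f.map false [b] true ⟨rfl, rfl, by cases b <;> simp⟩

theorem TransSys.Hom.comp_dToC_injective {a : Λ} {g g' : (cube 1 (fun _ => a)).Hom X}
    (h : g.comp (dToC a) = g'.comp (dToC a)) : g = g' := by
  have h0 := congrArg TransSys.Hom.f0 h
  have ha := congrArg TransSys.Hom.fa h
  ext ε
  · have hε : (fun _ => ε 0) = ε := funext fun i => by rw [Fin.eq_zero i]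
    rw [← hε]
    exact congrFun h0 (ε 0)
  · rw [Fin.eq_zero ε]
    exact congrFun ha false

theorem TransSys.Hom.exists_comp_dToC_eq_iff {a : Λ} (f : (dSys a).Hom X) :
    (∃ g : (cube 1 (fun _ => a)).Hom X, g.comp (dToC a) = f) ↔ f.fa false = f.fa true := by
  constructor
  · rintro ⟨g, rfl⟩
    rfl
  · intro hfa
    refine ⟨cubeOneHom (f.dSys_transition false) (f.label false), ?_⟩
    ext b <;> cases b
    · rfl
    · rfl
    · rfl
    · exact hfa

end

theorem csa1_iff_orthogonal_d_general {Λ : Type u} (X : TransSys.{u, u1, u2} Λ) :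
    CSA1 X.μ X.T ↔
      ∀ a : Λ, ∀ f : (dSys a).Hom X,
        ∃! g : (cube 1 (fun _ => a)).Hom X, g.comp (dToC a) = f := by
  constructor
  · intro hcsa a f
    have hfa : f.fa false = f.fa true :=
      hcsa _ _ _ _ (f.dSys_transition false) (f.dSys_transition true)
        ((f.label false).trans (f.label true).symm)
    obtain ⟨g, hg⟩ := f.exists_comp_dToC_eq_iff.mpr hfa
    exact ⟨g, hg, fun g' hg' => TransSys.Hom.comp_dToC_injective (hg'.trans hg.symm)⟩
  · intro horth α β u u' h h' hμ
    obtain ⟨g, hg, -⟩ := horth _ (dSysHom h h' hμ)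
    exact (dSysHom h h' hμ).exists_comp_dToC_eq_iff.mp ⟨g, hg⟩

/-- A weak higher dimensional transition system `X` satisfies CSA1 if and only
if it is orthogonal to the canonical morphism `D[a] → C_1[a]` for every
`a ∈ Σ`, i.e. every morphism `D[a] → X` factors uniquely through
`D[a] → C_1[a]`. -/
theorem csa1_iff_orthogonal_d {Λ : Type u} (X : TransSys.{u, u1, u2} Λ)
    (hne : ∀ α l β, X.T α l β → l ≠ [])
    (hmul : MultisetAxiom X.T) (hcoh : CoherenceAxiom X.T) :
    CSA1 X.μ X.T ↔
      ∀ a : Λ, ∀ f : (dSys a).Hom X,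
        ∃! g : (cube 1 (fun _ => a)).Hom X, g.comp (dToC a) = f :=
  csa1_iff_orthogonal_d_general X
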